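/- arXiv:2503.02985 — 2 statements merged into one kernel-verified Lean document; each statement's English description precedes it below -/
import Mathlib

section
/- Given the subspace relation X₁ = A X₀ + B U₀ + W₀ and any V with Φ V = [K; I_n] where Φ = D₀D₀ᵀ/t and D₀ = [U₀; X₀], the closed-loop matrix satisfies A + BK = (X̄₁ − W̄₀)V, where X̄₁ = X₁D₀ᵀ/t and W̄₀ = W₀D₀ᵀ/t. -/
open Matrix

/-! Removing the noise leaves `X₁ - W₀ = [B A] D₀`,
so `(X̄₁ - W̄₀) V = [B A] Φ V = [B A] [K; I] = A + B K`. -/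

section

variable {R l m n p q : Type*}

theorem sub_noise_eq_fromCols_mul_fromRows [Ring R] [Fintype m] [Fintype n]
    {A : Matrix l n R} {B : Matrix l m R} {X₀ : Matrix n q R} {U₀ : Matrix m q R}
    {X₁ W₀ : Matrix l q R} (hdyn : X₁ = A * X₀ + B * U₀ + W₀) :
    X₁ - W₀ = fromCols B A * fromRows U₀ X₀ := by
  rw [hdyn, fromCols_mul_fromRows]
  abel

theorem smul_mul_transpose_mul_of_eq_mul [CommSemiring R] [Fintype p] [Fintype q]
    {Y : Matrix l q R} (M : Matrix l p R) {D : Matrix p q R} (hY : Y = M * D) (c : R)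
    (V : Matrix p n R) :
    (c • (Y * Dᵀ)) * V = M * ((c • (D * Dᵀ)) * V) := by
  rw [hY, Matrix.mul_assoc, ← Matrix.mul_smul, Matrix.mul_assoc]

end

theorem stmt2_general {m n t : ℕ} (A : Matrix (Fin n) (Fin n) ℝ) (B : Matrix (Fin n) (Fin m) ℝ)
    (X₀ X₁ W₀ : Matrix (Fin n) (Fin t) ℝ) (U₀ : Matrix (Fin m) (Fin t) ℝ)
    (hdyn : X₁ = A * X₀ + B * U₀ + W₀)
    (D₀ : Matrix (Fin m ⊕ Fin n) (Fin t) ℝ) (hD : D₀ = fromRows U₀ X₀)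
    (K : Matrix (Fin m) (Fin n) ℝ) (V : Matrix (Fin m ⊕ Fin n) (Fin n) ℝ)
    (hV : ((1 / (t : ℝ)) • (D₀ * D₀ᵀ)) * V = fromRows K 1) :
    A + B * K = ((1 / (t : ℝ)) • (X₁ * D₀ᵀ) - (1 / (t : ℝ)) • (W₀ * D₀ᵀ)) * V := by
  have hsub : X₁ - W₀ = fromCols B A * D₀ := hD ▸ sub_noise_eq_fromCols_mul_fromRows hdyn
  rw [← smul_sub, ← Matrix.sub_mul, smul_mul_transpose_mul_of_eq_mul _ hsub, hV,
    fromCols_mul_fromRows, Matrix.mul_one, add_comm]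

/-- Given `X₁ = A X₀ + B U₀ + W₀` and `Φ V = [K; I_n]` with `Φ = D₀D₀ᵀ/t`,
`D₀ = [U₀; X₀]`, the closed-loop matrix satisfies `A + BK = (X̄₁ − W̄₀) V`. -/
theorem stmt2 {m n t : ℕ} (A : Matrix (Fin n) (Fin n) ℝ) (B : Matrix (Fin n) (Fin m) ℝ)
    (X₀ X₁ W₀ : Matrix (Fin n) (Fin t) ℝ) (U₀ : Matrix (Fin m) (Fin t) ℝ)
    (hdyn : X₁ = A * X₀ + B * U₀ + W₀)
    (D₀ : Matrix (Fin m ⊕ Fin n) (Fin t) ℝ) (hD : D₀ = fromRows U₀ X₀)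
    (hrank : D₀.rank = m + n)
    (K : Matrix (Fin m) (Fin n) ℝ) (V : Matrix (Fin m ⊕ Fin n) (Fin n) ℝ)
    (hV : ((1 / (t : ℝ)) • (D₀ * D₀ᵀ)) * V = fromRows K 1) :
    A + B * K = ((1 / (t : ℝ)) • (X₁ * D₀ᵀ) - (1 / (t : ℝ)) • (W₀ * D₀ᵀ)) * V :=
  stmt2_general A B X₀ X₁ W₀ U₀ hdyn D₀ hD K V hV
end

section
/- Let M ∈ ℝ^{n×n} with ‖M‖ < 1 (operator norm). Then the solution Σ of Σ = I_n + MΣMᵀ satisfies I_n ⪯ Σ ⪯ (1/(1 − ‖M‖²)) I_n. -/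
/-!
`Σ - I = ∑_{k ≥ 1} M^k (M^k)ᵀ` is a convergent sum of positive semidefinite matrices, and every
term satisfies `M^k (M^k)ᵀ ⪯ ‖M^k‖² I ⪯ ‖M‖^{2k} I`, so summing the geometric series bounds `Σ`
by `(1 - ‖M‖²)⁻¹ I`. Both comparisons pass to the limit because the positive semidefinite cone
is closed.
-/

open Matrix
open scoped Matrix.Norms.L2Operator MatrixOrder ComplexOrder

namespace Matrix

variable {𝕜 n : Type*} [RCLike 𝕜]

theorem smul_one_le_smul_one [DecidableEq n] {c d : ℝ} (h : c ≤ d) :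
    c • (1 : Matrix n n 𝕜) ≤ d • 1 := by
  rw [le_iff, ← sub_smul]
  exact PosSemidef.one.smul (sub_nonneg.2 h)

variable [Fintype n]

theorem isClosed_setOf_posSemidef : IsClosed {A : Matrix n n 𝕜 | A.PosSemidef} := by
  simp only [posSemidef_iff_dotProduct_mulVec, Set.ofPred_and, Set.ofPred_forall]
  refine (isClosed_eq continuous_id.matrix_conjTranspose continuous_id).inter
    (isClosed_iInter fun x => isClosed_le continuous_const ?_)
  fun_prop

instance instOrderClosedTopology : OrderClosedTopology (Matrix n n 𝕜) where
  isClosed_le' := isClosed_le_of_isClosed_nonneg <| by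
    simpa only [nonneg_iff_posSemidef] using isClosed_setOf_posSemidef

theorem star_dotProduct_self_eq_norm_sq (v : n → 𝕜) :
    star v ⬝ᵥ v = ((‖WithLp.toLp 2 v‖ ^ 2 : ℝ) : 𝕜) := by
  rw [dotProduct_comm, ← EuclideanSpace.inner_toLp_toLp, inner_self_eq_norm_sq_to_K]
  push_cast
  rfl

variable [DecidableEq n]

theorem l2_opNorm_one_le : ‖(1 : Matrix n n 𝕜)‖ ≤ 1 := by
  rw [← diagonal_one, l2_opNorm_diagonal]
  exact (pi_norm_le_iff_of_nonneg zero_le_one).2 fun _ => by simp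

theorem l2_opNorm_pow_le (A : Matrix n n 𝕜) (k : ℕ) : ‖A ^ k‖ ≤ ‖A‖ ^ k := by
  rcases k.eq_zero_or_pos with rfl | hk
  · simpa using l2_opNorm_one_le
  · exact norm_pow_le' A hk

theorem mul_conjTranspose_le_l2_opNorm_sq_smul_one (A : Matrix n n 𝕜) :
    A * Aᴴ ≤ (‖A‖ ^ 2 : ℝ) • (1 : Matrix n n 𝕜) := by
  rw [le_iff]
  refine PosSemidef.of_dotProduct_mulVec_nonneg ?_ fun x => ?_
  · exact (PosSemidef.one.smul (sq_nonneg ‖A‖)).isHermitian.sub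
      (isHermitian_mul_conjTranspose_self A)
  have hAx : ‖WithLp.toLp 2 (Aᴴ *ᵥ x)‖ ≤ ‖A‖ * ‖WithLp.toLp 2 x‖ := by
    simpa [l2_opNorm_conjTranspose] using l2_opNorm_mulVec Aᴴ (WithLp.toLp 2 x)
  have hquad : star x ⬝ᵥ (A * Aᴴ) *ᵥ x = star (Aᴴ *ᵥ x) ⬝ᵥ (Aᴴ *ᵥ x) := by
    rw [← mulVec_mulVec, dotProduct_mulVec, star_mulVec, conjTranspose_conjTranspose]
  rw [sub_mulVec, dotProduct_sub, hquad, smul_mulVec, one_mulVec, dotProduct_smul,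
    star_dotProduct_self_eq_norm_sq, star_dotProduct_self_eq_norm_sq,
    RCLike.real_smul_eq_coe_mul, ← RCLike.ofReal_mul, ← RCLike.ofReal_sub, RCLike.ofReal_nonneg,
    sub_nonneg, ← mul_pow]
  gcongr

theorem pow_mul_conjTranspose_pow_le (A : Matrix n n 𝕜) (k : ℕ) :
    A ^ k * (A ^ k)ᴴ ≤ (‖A‖ ^ 2) ^ k • (1 : Matrix n n 𝕜) := by
  refine (mul_conjTranspose_le_l2_opNorm_sq_smul_one _).trans (smul_one_le_smul_one ?_)
  rw [← pow_right_comm]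
  gcongr
  exact l2_opNorm_pow_le A k

theorem l2_opNorm_pow_mul_conjTranspose_pow_le (A : Matrix n n 𝕜) (k : ℕ) :
    ‖A ^ k * (A ^ k)ᴴ‖ ≤ (‖A‖ ^ 2) ^ k := by
  rw [← star_eq_conjTranspose, CStarRing.norm_self_mul_star, ← sq, ← pow_right_comm]
  gcongr
  exact l2_opNorm_pow_le A k

section Contraction

variable {A : Matrix n n 𝕜} (hA : ‖A‖ < 1)
include hA

theorem summable_pow_mul_conjTranspose_pow : Summable fun k => A ^ k * (A ^ k)ᴴ :=
  .of_norm_bounded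
    (summable_geometric_of_lt_one (sq_nonneg ‖A‖) (pow_lt_one₀ (norm_nonneg A) hA two_ne_zero))
    (l2_opNorm_pow_mul_conjTranspose_pow_le A)

theorem one_le_tsum_pow_mul_conjTranspose_pow : 1 ≤ ∑' k, A ^ k * (A ^ k)ᴴ := by
  rw [(summable_pow_mul_conjTranspose_pow hA).tsum_eq_zero_add, pow_zero, one_mul,
    conjTranspose_one]
  exact le_add_of_nonneg_right <|
    tsum_nonneg fun k => (posSemidef_self_mul_conjTranspose (A ^ (k + 1))).nonneg

theorem tsum_pow_mul_conjTranspose_pow_le :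
    ∑' k, A ^ k * (A ^ k)ᴴ ≤ (1 - ‖A‖ ^ 2)⁻¹ • (1 : Matrix n n 𝕜) := by
  have hr : ‖A‖ ^ 2 < 1 := pow_lt_one₀ (norm_nonneg A) hA two_ne_zero
  have hgeom := summable_geometric_of_lt_one (sq_nonneg ‖A‖) hr
  calc ∑' k, A ^ k * (A ^ k)ᴴ ≤ ∑' k, (‖A‖ ^ 2) ^ k • (1 : Matrix n n 𝕜) :=
        (summable_pow_mul_conjTranspose_pow hA).tsum_le_tsum (pow_mul_conjTranspose_pow_le A)
          (hgeom.smul_const _)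
    _ = (1 - ‖A‖ ^ 2)⁻¹ • 1 := by
        rw [hgeom.tsum_smul_const, tsum_geometric_of_lt_one (sq_nonneg ‖A‖) hr]

end Contraction

end Matrix

/-- If `‖M‖ < 1` (operator 2-norm), then the solution
`Σ = ∑_{k≥0} M^k (M^k)ᵀ` of `Σ = I + MΣMᵀ` satisfies `I ⪯ Σ ⪯ (1/(1 − ‖M‖²)) I`. -/
theorem stmt18 {n : ℕ} (M : Matrix (Fin n) (Fin n) ℝ) (hM : ‖M‖ < 1) :
    ((∑' k : ℕ, M ^ k * (M ^ k)ᵀ) - 1).PosSemidef ∧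
    ((1 / (1 - ‖M‖ ^ 2)) • (1 : Matrix (Fin n) (Fin n) ℝ) -
        ∑' k : ℕ, M ^ k * (M ^ k)ᵀ).PosSemidef := by
  simp only [← conjTranspose_eq_transpose_of_trivial, one_div]
  exact ⟨le_iff.1 (one_le_tsum_pow_mul_conjTranspose_pow hM),
    le_iff.1 (tsum_pow_mul_conjTranspose_pow_le hM)⟩
end
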